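/- arXiv:2204.01479 — 2 statements merged into one kernel-verified Lean document; each statement's English description precedes it below -/
import Mathlib

section
/- Let s̄ : ℤ → ℤ be ultimately periodic with parameters (t_p, ν̄, τ̄) where ν̄ > 0 and τ̄ ≥ 1. Define s''(t) = min over i ≥ t of s̄(i) (this minimum exists for every t since ν̄ > 0). Then for all t ≥ t_p, s''(t) = min_{t ≤ i ≤ t+τ̄−1} s̄(i), and s'' is ultimately periodic with parameters (t_p, ν̄, τ̄): s''(t + kτ̄) = kν̄ + s''(t) for all t ≥ t_p and k ≥ 0. -/
/-!
Writing `i ≥ t` as `j + qτ̄` with `j` in the window `[t, t + τ̄ - 1]` and `q ≥ 0`, periodicity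
gives `s̄ i = qν̄ + s̄ j ≥ s̄ j`, so the infimum over `[t, ∞)` is already attained on the window.
Shifting the window by `kτ̄` adds `kν̄` to each of its values, hence to their minimum.
-/

open Set

def IsUltimatelyPeriodic (s : ℤ → ℤ) (tp ν τ : ℤ) : Prop :=
  ∀ t ≥ tp, ∀ k : ℕ, s (t + k * τ) = k * ν + s t

theorem csInf_image_eq_of_forall_exists_le {α β : Type*} [ConditionallyCompleteLattice β]
    {f : α → β} {s t : Set α} (hs : s.Nonempty) (hbdd : BddBelow (f '' s)) (hst : s ⊆ t)
    (h : ∀ i ∈ t, ∃ j ∈ s, f j ≤ f i) : sInf (f '' t) = sInf (f '' s) := by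
  have hbdd_t : BddBelow (f '' t) := by
    obtain ⟨b, hb⟩ := hbdd
    refine ⟨b, ?_⟩
    rintro _ ⟨i, hi, rfl⟩
    obtain ⟨j, hj, hji⟩ := h i hi
    exact (hb (mem_image_of_mem f hj)).trans hji
  refine le_antisymm (csInf_le_csInf hbdd_t (hs.image f) (image_mono hst)) ?_
  refine le_csInf ((hs.mono hst).image f) ?_
  rintro _ ⟨i, hi, rfl⟩
  obtain ⟨j, hj, hji⟩ := h i hi
  exact (csInf_le hbdd (mem_image_of_mem f hj)).trans hji

namespace IsUltimatelyPeriodic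

variable {s : ℤ → ℤ} {tp ν τ : ℤ}

theorem exists_mem_Icc_le (hs : IsUltimatelyPeriodic s tp ν τ) (hν : 0 ≤ ν) (hτ : 0 < τ)
    {t i : ℤ} (ht : tp ≤ t) (hi : t ≤ i) : ∃ j ∈ Icc t (t + τ - 1), s j ≤ s i := by
  obtain ⟨q, hq⟩ := Int.eq_ofNat_of_zero_le (Int.ediv_nonneg (sub_nonneg.2 hi) hτ.le)
  set r := (i - t) % τ
  have hr₀ : 0 ≤ r := Int.emod_nonneg _ hτ.ne'
  have hr₁ : r < τ := Int.emod_lt_of_pos _ hτ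
  have hi_eq : i = t + r + q * τ := by linarith [hq ▸ Int.ediv_mul_add_emod (i - t) τ]
  have hsi : s i = q * ν + s (t + r) := by rw [← hs _ (by omega) q, ← hi_eq]
  refine ⟨t + r, ⟨by omega, by omega⟩, ?_⟩
  linarith [mul_nonneg q.cast_nonneg hν]

theorem image_image_add (hs : IsUltimatelyPeriodic s tp ν τ) {A : Set ℤ} (hA : A ⊆ Ici tp)
    (k : ℕ) : s '' ((· + k * τ) '' A) = (k * ν + ·) '' (s '' A) := by
  rw [image_image, image_image]
  exact image_congr fun t ht => hs t (hA ht) k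

end IsUltimatelyPeriodic

/-- For an ultimately periodic series `s̄` with positive gain, the upper running minimum
`s''(t) = min_{i ≥ t} s̄(i)` satisfies, for `t ≥ t_p`, `s'' t = min_{t ≤ i ≤ t+τ̄−1} s̄ i`,
and `s''` is ultimately periodic with the same parameters `(t_p, ν̄, τ̄)`. -/
theorem upper_running_min_periodic
    (sbar : ℤ → ℤ) (tp νbar τbar : ℤ)
    (hν : 0 < νbar) (hτ : 1 ≤ τbar)
    (hper : ∀ t ≥ tp, ∀ k : ℕ, sbar (t + k * τbar) = k * νbar + sbar t)
    (s'' : ℤ → ℤ)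
    (hs'' : ∀ t : ℤ, s'' t = sInf (sbar '' Set.Ici t)) :
    (∀ t ≥ tp, s'' t = sInf (sbar '' Set.Icc t (t + τbar - 1))) ∧
    (∀ t ≥ tp, ∀ k : ℕ, s'' (t + k * τbar) = k * νbar + s'' t) := by
  have hper : IsUltimatelyPeriodic sbar tp νbar τbar := hper
  have window_eq : ∀ t ≥ tp, s'' t = sInf (sbar '' Icc t (t + τbar - 1)) := fun t ht => by
    rw [hs'']
    exact csInf_image_eq_of_forall_exists_le (nonempty_Icc.2 (by omega))
      ((finite_Icc _ _).image sbar).bddBelow Icc_subset_Ici_self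
      fun i hi => hper.exists_mem_Icc_le hν.le (by omega) ht hi
  refine ⟨window_eq, fun t ht k => ?_⟩
  have hk : 0 ≤ (k : ℤ) * τbar := by positivity
  have hshift : Icc (t + k * τbar) (t + k * τbar + τbar - 1) =
      (· + k * τbar) '' Icc t (t + τbar - 1) := by
    rw [image_add_const_Icc]; congr 1; ring
  rw [window_eq _ (by omega), window_eq t ht, hshift,
    hper.image_image_add (fun i hi => ht.trans hi.1) k]
  exact ((OrderIso.addLeft _).map_csInf' ((nonempty_Icc.2 (by omega)).image sbar)
    ((finite_Icc _ _).image sbar).bddBelow).symm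
end

section
/- Dual residual of a monomial by a polynomial: let p = ⊕_{i=1}^m nᵢδ^{tᵢ} be a polynomial counter with n₁ < ... < n_m, t₁ < ... < t_m ∈ ℤ, and r = νδ^τ a monomial with ν ∈ ℤ and τ ≤ t_m. Let j be the smallest index with tⱼ ≥ τ. Then the least counter x with p ⊙ x ⪰ r (pointwise-greatest non-decreasing x : ℤ → ℤ∪{+∞} with p(t) + x(t) ≤ r(t) for all t) is x(t) = ν − nⱼ for t ≤ τ and x(t) = +∞ for t > τ, i.e., r ⊙♭ p = (ν − nⱼ)δ^τ = ⋀_{i=j}^m (ν − nᵢ)δ^τ. -/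
/-!
A polynomial counter `p` is non-decreasing, so every non-decreasing `x` with
`p t + x t ≤ (νδ^τ) t` for all `t` satisfies `x t ≤ x τ ≤ ν - p τ` for `t ≤ τ`; conversely
`(ν - p τ)δ^τ` is admissible because `p t ≤ p τ` for `t ≤ τ`. Hence the residual is `(ν - p τ)δ^τ`, and `p τ = nⱼ` since the terms
`nᵢδ^{tᵢ}` alive at `τ` are exactly those with `i ≥ j`, among which `nⱼ` is least.
-/

open Finset

theorem WithTop.coe_add_le_coe_iff_le_coe_sub {G : Type*} [AddCommGroup G] [LinearOrder G]
    [IsOrderedAddMonoid G] (c ν : G) (x : WithTop G) :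
    (c : WithTop G) + x ≤ ν ↔ x ≤ ↑(ν - c) := by
  conv_lhs => rw [← add_sub_cancel c ν, WithTop.coe_add]
  exact add_le_add_iff_right_of_ne_top WithTop.coe_ne_top

namespace Counter

variable {ι G : Type*} [Preorder ι] [DecidableLE ι] [LinearOrder G]

/-- The monomial `aδ^τ`. -/
def monomial (a : G) (τ : ι) (t : ι) : WithTop G :=
  if t ≤ τ then a else ⊤

/-- The polynomial `⊕ᵢ (n i)δ^{tt i}`. -/
def poly {κ : Type*} [Fintype κ] (n : κ → G) (tt : κ → ι) (t : ι) : WithTop G :=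
  (univ.filter fun i => t ≤ tt i).inf fun i => (n i : WithTop G)

theorem monotone_monomial (a : G) (τ : ι) : Monotone (monomial a τ) := by
  intro s t hst
  by_cases ht : t ≤ τ
  · simp [monomial, hst.trans ht, ht]
  · simp [monomial, ht]

theorem monotone_poly {κ : Type*} [Fintype κ] (n : κ → G) (tt : κ → ι) :
    Monotone (poly n tt) :=
  fun _ _ hst => Finset.inf_mono fun _ hi => by
    simp only [mem_filter, mem_univ, true_and] at hi ⊢
    exact hst.trans hi

theorem poly_eq_of_filter_eq_Ici {κ : Type*} [Fintype κ] [Preorder κ] {n : κ → G}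
    (hn : Monotone n) (tt : κ → ι) {τ : ι} {j : κ} (hj : ∀ i, j ≤ i ↔ τ ≤ tt i) :
    poly n tt τ = n j := by
  refine le_antisymm (Finset.inf_le (by simp [← hj])) (Finset.le_inf fun i hi => ?_)
  simp only [mem_filter, mem_univ, true_and, ← hj] at hi
  exact WithTop.coe_le_coe.mpr (hn hi)

variable [AddCommGroup G] [IsOrderedAddMonoid G] in
theorem isGreatest_residual_monomial {p : ι → WithTop G} (hp : Monotone p) {ν c : G} {τ : ι}
    (hpτ : p τ = c) :
    IsGreatest {x : ι → WithTop G | Monotone x ∧ ∀ t, p t + x t ≤ monomial ν τ t}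
      (monomial (ν - c) τ) := by
  refine ⟨⟨monotone_monomial _ _, fun t => ?_⟩, fun x ⟨hx, hpx⟩ t => ?_⟩
  · by_cases ht : t ≤ τ
    · simp only [monomial, if_pos ht]
      calc p t + ↑(ν - c) ≤ p τ + ↑(ν - c) := add_le_add_left (hp ht) _
        _ = ν := by rw [hpτ, ← WithTop.coe_add, add_sub_cancel]
    · simp [monomial, ht]
  · by_cases ht : t ≤ τ
    · have hxτ : x τ ≤ ↑(ν - c) := by
        simpa [monomial, hpτ, WithTop.coe_add_le_coe_iff_le_coe_sub] using hpx τ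
      simpa [monomial, ht] using (hx ht).trans hxτ
    · simp [monomial, ht]

end Counter

open Counter in
theorem dual_residual_monomial_poly_general (m : ℕ) (n tt : Fin (m + 1) → ℤ)
    (hn : StrictMono n)
    (ν τ : ℤ) (j : Fin (m + 1))
    (hj : ∀ i : Fin (m + 1), ((j : ℕ) ≤ (i : ℕ) ↔ τ ≤ tt i)) :
    IsGreatest
      {x : ℤ → WithTop ℤ | Monotone x ∧
        ∀ t : ℤ,
          (Finset.univ.filter (fun i : Fin (m + 1) => t ≤ tt i)).inf
              (fun i => ((n i : ℤ) : WithTop ℤ))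
            + x t
          ≤ (if t ≤ τ then (ν : WithTop ℤ) else ⊤)}
      (fun t : ℤ => if t ≤ τ then ((ν - n j : ℤ) : WithTop ℤ) else ⊤) :=
  isGreatest_residual_monomial (ν := ν) (monotone_poly n tt)
    (poly_eq_of_filter_eq_Ici hn.monotone tt hj)

/-- Dual residual of a monomial by a polynomial counter.  The polynomial
`p = ⊕_i nᵢδ^{tᵢ}` is the map `p t = min {nᵢ | t ≤ tᵢ}` (`+∞` after `t_m`), with `n`,
`tt` strictly increasing, and `r = νδ^τ`.  Let `j` be the smallest index with `tⱼ ≥ τ`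
(its existence in `Fin (m+1)` encodes `τ ≤ t_m`).  Then the pointwise-greatest
non-decreasing `x : ℤ → ℤ ∪ {+∞}` with `p(t) + x(t) ≤ r(t)` for all `t` is
`x* = (ν − nⱼ)δ^τ`, i.e. `x*(t) = ν − nⱼ` for `t ≤ τ` and `+∞` after. -/
theorem dual_residual_monomial_poly (m : ℕ) (n tt : Fin (m + 1) → ℤ)
    (hn : StrictMono n) (htt : StrictMono tt)
    (ν τ : ℤ) (j : Fin (m + 1))
    (hj : ∀ i : Fin (m + 1), ((j : ℕ) ≤ (i : ℕ) ↔ τ ≤ tt i)) :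
    IsGreatest
      {x : ℤ → WithTop ℤ | Monotone x ∧
        ∀ t : ℤ,
          (Finset.univ.filter (fun i : Fin (m + 1) => t ≤ tt i)).inf
              (fun i => ((n i : ℤ) : WithTop ℤ))
            + x t
          ≤ (if t ≤ τ then (ν : WithTop ℤ) else ⊤)}
      (fun t : ℤ => if t ≤ τ then ((ν - n j : ℤ) : WithTop ℤ) else ⊤) :=
  dual_residual_monomial_poly_general m n tt hn ν τ j hj
end
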